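/- arXiv:2006.09215 — 5 statements merged into one kernel-verified Lean document; each statement's English description precedes it below -/
import Mathlib

section
/- If (G, ‖·‖) is a normed gyrogroup and * is a continuous t-norm, then the fuzzy set N(x,t) = t/(t + ‖x‖) on G × (0,∞) is a fuzzy gyronorm on G with respect to *. In particular N(x⊕y, t+s) ≥ N(x,t) * N(y,s) for all x, y ∈ G and t, s > 0. -/
open Filter Topology

universe u

class Gyrogroup (G : Type u) where
  op : G → G → G
  e : G
  neg : G → G
  gyr : G → G → G → G
  op_left_id : ∀ x, op e x = x
  op_left_neg : ∀ x, op (neg x) x = e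
  gyr_bijective : ∀ a b, Function.Bijective (gyr a b)
  gyr_op : ∀ a b x y, gyr a b (op x y) = op (gyr a b x) (gyr a b y)
  gyrassoc : ∀ x y z, op x (op y z) = op (op x y) (gyr x y z)
  left_loop : ∀ x y, gyr (op x y) y = gyr x y

open Gyrogroup

/-- A continuous t-norm on `[0,1]`, represented as a binary operation on `ℝ`
with the t-norm axioms on `[0,1]`. -/
structure ContinuousTNorm (star : ℝ → ℝ → ℝ) : Prop where
  mem : ∀ a b, a ∈ Set.Icc (0:ℝ) 1 → b ∈ Set.Icc (0:ℝ) 1 → star a b ∈ Set.Icc (0:ℝ) 1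
  comm : ∀ a b, star a b = star b a
  assoc : ∀ a b c, star (star a b) c = star a (star b c)
  one_id : ∀ a, a ∈ Set.Icc (0:ℝ) 1 → star a 1 = a
  mono : ∀ a b c d, a ≤ c → b ≤ d → star a b ≤ star c d
  cont : ContinuousOn (fun p : ℝ × ℝ => star p.1 p.2) (Set.Icc 0 1 ×ˢ Set.Icc 0 1)

/-- A fuzzy metric in the sense of George and Veeramani. -/
structure IsFuzzyMetric {X : Type u} (M : X → X → ℝ → ℝ) (star : ℝ → ℝ → ℝ) : Prop where
  mem : ∀ x y t, 0 < t → M x y t ∈ Set.Icc (0:ℝ) 1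
  pos : ∀ x y t, 0 < t → 0 < M x y t
  eq_one_iff : ∀ x y, (∀ t, 0 < t → M x y t = 1) ↔ x = y
  symm : ∀ x y t, 0 < t → M x y t = M y x t
  tri : ∀ x y z t s, 0 < t → 0 < s → star (M x y t) (M y z s) ≤ M x z (t + s)
  cont : ∀ x y, ContinuousOn (M x y) (Set.Ioi 0)

/-- A gyronorm on a gyrogroup. -/
structure IsGyronorm {G : Type u} [Gyrogroup G] (n : G → ℝ) : Prop where
  nonneg : ∀ x, 0 ≤ n x
  eq_zero_iff : ∀ x, n x = 0 ↔ x = (Gyrogroup.e : G)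
  neg_eq : ∀ x, n (Gyrogroup.neg x) = n x
  subadd : ∀ x y, n (Gyrogroup.op x y) ≤ n x + n y
  gyr_eq : ∀ a b x, n (Gyrogroup.gyr a b x) = n x

/-- A fuzzy gyronorm on a gyrogroup. -/
structure IsFuzzyGyronorm {G : Type u} [Gyrogroup G] (N : G → ℝ → ℝ) (star : ℝ → ℝ → ℝ) : Prop where
  mem : ∀ x t, 0 < t → N x t ∈ Set.Icc (0:ℝ) 1
  pos : ∀ x t, 0 < t → 0 < N x t
  eq_one_iff : ∀ x, (∀ t, 0 < t → N x t = 1) ↔ x = (Gyrogroup.e : G)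
  neg_eq : ∀ x t, 0 < t → N (Gyrogroup.neg x) t = N x t
  subadd : ∀ x y t s, 0 < t → 0 < s → star (N x t) (N y s) ≤ N (Gyrogroup.op x y) (t + s)
  cont : ∀ x, ContinuousOn (N x) (Set.Ioi 0)
  gyr_eq : ∀ a b x t, 0 < t → N (Gyrogroup.gyr a b x) t = N x t

lemma aux_mem (a t : ℝ) (ha : 0 ≤ a) (ht : 0 < t) : t / (t + a) ∈ Set.Icc (0:ℝ) 1 := by
  have hd : 0 < t + a := by linarith
  constructor
  · positivity
  · rw [div_le_one hd]; linarith

lemma star_le_min (star : ℝ → ℝ → ℝ) (hstar : ContinuousTNorm star)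
    (a b : ℝ) (ha : a ∈ Set.Icc (0:ℝ) 1) (hb : b ∈ Set.Icc (0:ℝ) 1) :
    star a b ≤ min a b := by
  refine le_min ?_ ?_
  · have := hstar.mono a b a 1 le_rfl hb.2
    rwa [hstar.one_id a ha] at this
  · have := hstar.mono b a b 1 le_rfl ha.2
    rw [hstar.one_id b hb] at this
    rwa [hstar.comm a b]

lemma min_le_combined (a b t s : ℝ) (ha : 0 ≤ a) (hb : 0 ≤ b) (ht : 0 < t) (hs : 0 < s) :
    min (t / (t + a)) (s / (s + b)) ≤ (t + s) / (t + s + (a + b)) := by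
  have hd : 0 < t + s + (a + b) := by linarith
  rcases le_total (t * b) (s * a) with h | h
  · refine (min_le_left _ _).trans ?_
    rw [div_le_div_iff₀ (by linarith) hd]; nlinarith
  · refine (min_le_right _ _).trans ?_
    rw [div_le_div_iff₀ (by linarith) hd]; nlinarith

theorem standard_fuzzy_gyronorm {G : Type u} [Gyrogroup G] (n : G → ℝ) (star : ℝ → ℝ → ℝ)
    (hn : IsGyronorm n) (hstar : ContinuousTNorm star) :
    IsFuzzyGyronorm (fun x t => t / (t + n x)) star ∧
    (∀ x y : G, ∀ t s : ℝ, 0 < t → 0 < s →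
      star (t / (t + n x)) (s / (s + n y)) ≤ (t + s) / ((t + s) + n (op x y))) := by

  have key : ∀ x y : G, ∀ t s : ℝ, 0 < t → 0 < s →
      star (t / (t + n x)) (s / (s + n y)) ≤ (t + s) / ((t + s) + n (op x y)) := by
    intro x y t s ht hs
    have hmx := aux_mem (n x) t (hn.nonneg x) ht
    have hmy := aux_mem (n y) s (hn.nonneg y) hs
    refine (star_le_min star hstar _ _ hmx hmy).trans ?_
    refine (min_le_combined (n x) (n y) t s (hn.nonneg x) (hn.nonneg y) ht hs).trans ?_
    apply div_le_div_of_nonneg_left (by linarith) (by have := hn.nonneg (op x y); linarith)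
    have := hn.subadd x y; linarith
  refine ⟨?_, key⟩
  constructor
  · intro x t ht; exact aux_mem (n x) t (hn.nonneg x) ht
  · intro x t ht
    have := hn.nonneg x
    positivity
  · intro x
    constructor
    · intro h
      have h1 := h 1 one_pos
      have hnx := hn.nonneg x
      have : n x = 0 := by
        field_simp at h1
        linarith
      exact (hn.eq_zero_iff x).mp this
    · intro h t ht
      simp only [h, (hn.eq_zero_iff (Gyrogroup.e : G)).mpr rfl, add_zero]
      exact div_self ht.ne'
  · intro x t ht; rw [hn.neg_eq]
  · intro x y t s ht hs; exact key x y t s ht hs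
  · intro x
    apply ContinuousOn.div continuousOn_id (by fun_prop)
    intro t ht
    have := hn.nonneg x
    simp only [Set.mem_Ioi] at ht
    positivity
  · intro a b x t ht; rw [hn.gyr_eq]
end

section
/- Let (G, N, *) be a fuzzy normed gyrogroup and define M(x,y,t) = N(⊖x ⊕ y, t). Then (M, *) is a fuzzy metric on G in the sense of George and Veeramani; i.e., M(x,y,t) > 0; M(x,y,t) = 1 for all t iff x = y; M is symmetric; M(x,z,t+s) ≥ M(x,y,t) * M(y,z,s); and M(x,y,·) is continuous on (0,∞). -/
open Filter Topology

universe u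

open Gyrogroup

section GyroLemmas

variable {G : Type u} [Gyrogroup G]

lemma op_injective (a : G) : Function.Injective (op a) := by
  intro x y h
  have h1 : op (neg a) (op a x) = op (neg a) (op a y) := by rw [h]
  rw [gyrassoc, gyrassoc, op_left_neg, op_left_id, op_left_id] at h1
  exact (gyr_bijective (neg a) a).1 h1

lemma gyr_e_left (a x : G) : gyr e a x = x := by
  have h := gyrassoc (e : G) a x
  rw [op_left_id, op_left_id] at h
  exact (op_injective a h.symm)

lemma gyr_neg_self (a x : G) : gyr (neg a) a x = x := by
  have h := left_loop (neg a) a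
  rw [op_left_neg] at h
  rw [← h, gyr_e_left]

lemma left_cancel (a b : G) : op (neg a) (op a b) = b := by
  rw [gyrassoc, op_left_neg, op_left_id, gyr_neg_self]

lemma gyr_e (a b : G) : gyr a b e = (e : G) := by
  have h : gyr a b (op e e) = op (gyr a b e) (gyr a b e) := gyr_op a b e e
  rw [op_left_id] at h
  have h2 : op (neg (gyr a b e)) (gyr a b e) = op (neg (gyr a b e)) (op (gyr a b e) (gyr a b e)) := by
    rw [← h]
  rw [left_cancel, op_left_neg] at h2
  exact h2.symm

lemma op_right_id (a : G) : op a e = a := by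
  apply op_injective (neg a)
  rw [gyrassoc, op_left_neg, op_left_id, gyr_neg_self]

lemma gyro_neg_neg (a : G) : neg (neg a) = a := by
  have h := left_cancel (neg a) a
  rw [op_left_neg, op_right_id] at h
  exact h

lemma op_right_neg (a : G) : op a (neg a) = e := by
  have h := op_left_neg (neg a)
  rw [gyro_neg_neg] at h
  exact h

lemma gyr_self_neg (a x : G) : gyr a (neg a) x = x := by
  have h := left_loop a (neg a)
  rw [op_right_neg] at h
  rw [← h, gyr_e_left]

lemma left_cancel2 (a b : G) : op a (op (neg a) b) = b := by
  rw [gyrassoc, op_right_neg, op_left_id, gyr_self_neg]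

lemma gyro_neg_unique {a b : G} (h : op a b = e) : b = neg a := by
  have := left_cancel a b
  rw [h, op_right_id] at this
  exact this.symm

lemma neg_op (a b : G) : neg (op a b) = gyr a b (op (neg b) (neg a)) := by
  symm
  apply gyro_neg_unique
  rw [← gyrassoc, left_cancel2, op_right_neg]

end GyroLemmas

theorem fuzzy_gyronorm_metric {G : Type u} [Gyrogroup G] (N : G → ℝ → ℝ) (star : ℝ → ℝ → ℝ)
    (hstar : ContinuousTNorm star) (hN : IsFuzzyGyronorm N star) :
    IsFuzzyMetric (fun x y t => N (op (neg x) y) t) star := by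
  constructor
  · intro x y t ht; exact hN.mem _ t ht
  · intro x y t ht; exact hN.pos _ t ht
  · intro x y
    rw [hN.eq_one_iff]
    constructor
    · intro h
      have : op (neg x) y = op (neg x) x := by rw [h, op_left_neg]
      exact (op_injective (neg x) this).symm
    · intro h; rw [h, op_left_neg]
  · intro x y t ht
    have h1 : neg (op (neg x) y) = gyr (neg x) y (op (neg y) x) := by
      rw [neg_op, gyro_neg_neg]
    calc N (op (neg x) y) t = N (neg (op (neg x) y)) t := (hN.neg_eq _ t ht).symm
      _ = N (gyr (neg x) y (op (neg y) x)) t := by rw [h1]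
      _ = N (op (neg y) x) t := hN.gyr_eq _ _ _ t ht
  · intro x y z t s ht hs
    have key : op (neg x) z = op (op (neg x) y) (gyr (neg x) y (op (neg y) z)) := by
      rw [← gyrassoc, left_cancel2]
    calc star (N (op (neg x) y) t) (N (op (neg y) z) s)
        = star (N (op (neg x) y) t) (N (gyr (neg x) y (op (neg y) z)) s) := by
          rw [hN.gyr_eq _ _ _ s hs]
      _ ≤ N (op (op (neg x) y) (gyr (neg x) y (op (neg y) z))) (t + s) :=
          hN.subadd _ _ t s ht hs
      _ = N (op (neg x) z) (t + s) := by rw [← key]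
  · intro x y; exact hN.cont _
end

section
/- Let (G, N, *) be a fuzzy normed gyrogroup satisfying the right-gyrotranslation inequality M(x⊕a, y⊕a, t) ≥ M(x,y,t), where M is the induced fuzzy gyronorm metric. Then with the topology induced by (M, *), the binary operation ⊕: G × G → G and the inverse operation x ↦ ⊖x are continuous; i.e., G is a topological gyrogroup. -/
open Filter Topology

universe u

open Gyrogroup

/-- The topology induced by a fuzzy metric, generated by the open balls. -/
def fuzzyTopology {X : Type u} (M : X → X → ℝ → ℝ) : TopologicalSpace X :=
  TopologicalSpace.generateFrom
    {B | ∃ x ε t, 0 < ε ∧ ε < 1 ∧ 0 < t ∧ B = {y | 1 - ε < M x y t}}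


namespace GyroAux

variable {G : Type u} [Gyrogroup G]


lemma cancel_left {a x y : G} (h : op a x = op a y) : x = y := by
  have h1 : op (neg a) (op a x) = op (neg a) (op a y) := by rw [h]
  rw [gyrassoc, gyrassoc, op_left_neg, op_left_id, op_left_id] at h1
  exact (gyr_bijective (neg a) a).1 h1

lemma gyr_e_left (b z : G) : gyr e b z = z := by
  have h := gyrassoc e b z
  rw [op_left_id, op_left_id] at h
  exact (cancel_left h).symm

lemma gyr_neg_self (a z : G) : gyr (neg a) a z = z := by
  have h := left_loop (neg a) a
  rw [op_left_neg] at h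
  rw [← h, gyr_e_left]

lemma left_cancel (a z : G) : op (neg a) (op a z) = z := by
  rw [gyrassoc, op_left_neg, op_left_id, gyr_neg_self]

lemma op_e_right (a : G) : op a e = a := by
  have h1 : op (neg a) (op a e) = op (neg a) a := by
    rw [left_cancel, op_left_neg]
  exact cancel_left h1

lemma op_right_neg (a : G) : op a (neg a) = e := by
  have h1 : op (neg a) (op a (neg a)) = op (neg a) e := by
    rw [left_cancel, op_e_right]
  exact cancel_left h1

lemma neg_neg' (a : G) : neg (neg a) = a := by
  have h := left_cancel (neg a) a
  rw [op_left_neg, op_e_right] at h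
  exact h

lemma neg_unique {u x : G} (h : op u x = e) : u = neg x := by
  have h2 := left_cancel u x
  rw [h, op_e_right] at h2
  rw [← h2, neg_neg']

lemma gyr_e (a b : G) : gyr a b e = e := by
  have h1 : op (gyr a b e) (gyr a b e) = op (gyr a b e) e := by
    rw [← gyr_op, op_left_id, op_e_right]
  exact (cancel_left h1)

lemma gyr_neg (a b x : G) : gyr a b (neg x) = neg (gyr a b x) := by
  apply neg_unique
  rw [← gyr_op, op_left_neg, gyr_e]

lemma gyr_eq' (a b z : G) : gyr a b z = op (neg (op a b)) (op a (op b z)) := by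
  rw [gyrassoc a b z, left_cancel]

lemma op_neg_cancel (x y : G) : op x (op (neg x) y) = y := by
  have h := gyrassoc x (neg x) y
  rw [op_right_neg, op_left_id] at h
  have h2 : gyr x (neg x) y = y := by
    have h3 := gyr_neg_self (neg x) y
    rwa [neg_neg'] at h3
  rw [h, h2]

lemma key_left (a x y : G) : op (neg (op a x)) (op a y) = gyr a x (op (neg x) y) := by
  rw [gyr_eq' a x (op (neg x) y), op_neg_cancel]

lemma tri_decomp (x y z : G) :
    op (neg x) z = op (op (neg x) y) (gyr (neg x) y (op (neg y) z)) := by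
  rw [← gyrassoc, op_neg_cancel]

end GyroAux

namespace FAux


lemma exists_lt_star {star : ℝ → ℝ → ℝ} (hstar : ContinuousTNorm star) {c r : ℝ}
    (hc : c ∈ Set.Icc (0:ℝ) 1) (h : r < c) :
    ∃ δ : ℝ, 0 < δ ∧ δ < 1 ∧ r < star c (1 - δ) := by
  have hmem : ((c, (1:ℝ)) : ℝ × ℝ) ∈ Set.Icc (0:ℝ) 1 ×ˢ Set.Icc (0:ℝ) 1 :=
    ⟨hc, by norm_num⟩
  have hcont : ContinuousWithinAt (fun p : ℝ × ℝ => star p.1 p.2)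
      (Set.Icc 0 1 ×ˢ Set.Icc 0 1) (c, 1) := hstar.cont _ hmem
  have hg : Tendsto (fun δ : ℝ => ((c, 1 - δ) : ℝ × ℝ)) (𝓝[Set.Ioo (0:ℝ) 1] 0)
      (𝓝[Set.Icc (0:ℝ) 1 ×ˢ Set.Icc (0:ℝ) 1] (c, 1)) := by
    apply tendsto_nhdsWithin_of_tendsto_nhds_of_eventually_within
    · have h1 : Tendsto (fun δ : ℝ => (1 : ℝ) - δ) (𝓝 0) (𝓝 1) := by
        have h2 : Continuous (fun δ : ℝ => (1 : ℝ) - δ) := by continuity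
        have h3 := h2.tendsto 0
        norm_num at h3
        exact h3
      exact ((tendsto_const_nhds.prodMk_nhds h1)).mono_left nhdsWithin_le_nhds
    · filter_upwards [self_mem_nhdsWithin] with δ hδ
      simp only [Set.mem_prod, Set.mem_Icc]
      refine ⟨⟨hc.1, hc.2⟩, ?_, ?_⟩ <;> linarith [hδ.1, hδ.2]
  have hT : Tendsto (fun δ : ℝ => star c (1 - δ)) (𝓝[Set.Ioo (0:ℝ) 1] 0)
      (𝓝 (star c 1)) := hcont.tendsto.comp hg
  rw [hstar.one_id c hc] at hT
  have hev : ∀ᶠ δ in 𝓝[Set.Ioo (0:ℝ) 1] 0, r < star c (1 - δ) :=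
    hT.eventually (eventually_gt_nhds h)
  have hne : (𝓝[Set.Ioo (0:ℝ) 1] (0:ℝ)).NeBot := by
    rw [← mem_closure_iff_nhdsWithin_neBot, closure_Ioo (by norm_num : (0:ℝ) ≠ 1)]
    exact ⟨le_refl _, by norm_num⟩
  obtain ⟨δ, hδ, hδ2⟩ := (eventually_mem_nhdsWithin.and hev).exists
  exact ⟨δ, hδ.1, hδ.2, hδ2⟩

lemma exists_star_self {star : ℝ → ℝ → ℝ} (hstar : ContinuousTNorm star) {r : ℝ}
    (h : r < 1) : ∃ δ : ℝ, 0 < δ ∧ δ < 1 ∧ r < star (1 - δ) (1 - δ) := by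
  have hmem : (((1:ℝ), (1:ℝ)) : ℝ × ℝ) ∈ Set.Icc (0:ℝ) 1 ×ˢ Set.Icc (0:ℝ) 1 := by
    constructor <;> norm_num
  have hcont : ContinuousWithinAt (fun p : ℝ × ℝ => star p.1 p.2)
      (Set.Icc 0 1 ×ˢ Set.Icc 0 1) (1, 1) := hstar.cont _ hmem
  have hg : Tendsto (fun δ : ℝ => ((1 - δ, 1 - δ) : ℝ × ℝ)) (𝓝[Set.Ioo (0:ℝ) 1] 0)
      (𝓝[Set.Icc (0:ℝ) 1 ×ˢ Set.Icc (0:ℝ) 1] (1, 1)) := by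
    apply tendsto_nhdsWithin_of_tendsto_nhds_of_eventually_within
    · have h1 : Tendsto (fun δ : ℝ => (1 : ℝ) - δ) (𝓝 0) (𝓝 1) := by
        have h2 : Continuous (fun δ : ℝ => (1 : ℝ) - δ) := by continuity
        have h3 := h2.tendsto 0
        norm_num at h3
        exact h3
      exact (h1.prodMk_nhds h1).mono_left nhdsWithin_le_nhds
    · filter_upwards [self_mem_nhdsWithin] with δ hδ
      simp only [Set.mem_prod, Set.mem_Icc]
      refine ⟨⟨?_, ?_⟩, ?_, ?_⟩ <;> linarith [hδ.1, hδ.2]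
  have hT : Tendsto (fun δ : ℝ => star (1 - δ) (1 - δ)) (𝓝[Set.Ioo (0:ℝ) 1] 0)
      (𝓝 (star 1 1)) := hcont.tendsto.comp hg
  rw [hstar.one_id 1 (by norm_num)] at hT
  have hev : ∀ᶠ δ in 𝓝[Set.Ioo (0:ℝ) 1] 0, r < star (1 - δ) (1 - δ) :=
    hT.eventually (eventually_gt_nhds h)
  have hne : (𝓝[Set.Ioo (0:ℝ) 1] (0:ℝ)).NeBot := by
    rw [← mem_closure_iff_nhdsWithin_neBot, closure_Ioo (by norm_num : (0:ℝ) ≠ 1)]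
    exact ⟨le_refl _, by norm_num⟩
  obtain ⟨δ, hδ, hδ2⟩ := (eventually_mem_nhdsWithin.and hev).exists
  exact ⟨δ, hδ.1, hδ.2, hδ2⟩

lemma exists_t0 {f : ℝ → ℝ} (hf : ContinuousOn f (Set.Ioi 0)) {t r : ℝ}
    (ht : 0 < t) (h : r < f t) : ∃ t0 : ℝ, 0 < t0 ∧ t0 < t ∧ r < f t0 := by
  have hcont : ContinuousWithinAt f (Set.Ioi 0) t := hf t (Set.mem_Ioi.mpr ht)
  have hT : Tendsto f (𝓝[Set.Ioo (0:ℝ) t] t) (𝓝 (f t)) :=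
    hcont.tendsto.mono_left (nhdsWithin_mono _ Set.Ioo_subset_Ioi_self)
  have hev : ∀ᶠ t0 in 𝓝[Set.Ioo (0:ℝ) t] t, r < f t0 :=
    hT.eventually (eventually_gt_nhds h)
  have hne : (𝓝[Set.Ioo (0:ℝ) t] t).NeBot := by
    rw [← mem_closure_iff_nhdsWithin_neBot, closure_Ioo (ne_of_lt ht)]
    exact ⟨le_of_lt ht, le_refl _⟩
  obtain ⟨t0, ht0, ht0'⟩ := (eventually_mem_nhdsWithin.and hev).exists
  exact ⟨t0, ht0.1, ht0.2, ht0'⟩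

end FAux

theorem right_ineq_topological_gyrogroup {G : Type u} [Gyrogroup G]
    (N : G → ℝ → ℝ) (star : ℝ → ℝ → ℝ)
    (hstar : ContinuousTNorm star) (hN : IsFuzzyGyronorm N star)
    (M : G → G → ℝ → ℝ) (hM : M = fun x y t => N (op (neg x) y) t)
    (hright : ∀ x y a : G, ∀ t : ℝ, 0 < t → M x y t ≤ M (op x a) (op y a) t) :
    @Continuous (G × G) G
      (@instTopologicalSpaceProd G G (fuzzyTopology M) (fuzzyTopology M)) (fuzzyTopology M)
      (fun p => op p.1 p.2) ∧
    @Continuous G G (fuzzyTopology M) (fuzzyTopology M) neg := by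
  have hMdef : ∀ x y t, M x y t = N (op (neg x) y) t := by intro x y t; rw [hM]
  have hM01 : ∀ x y t, 0 < t → M x y t ∈ Set.Icc (0:ℝ) 1 := by
    intro x y t ht; rw [hMdef]; exact hN.mem _ t ht
  have hMself : ∀ (x : G) (t : ℝ), 0 < t → M x x t = 1 := by
    intro x t ht
    rw [hMdef, op_left_neg]
    exact ((hN.eq_one_iff e).mpr rfl) t ht
  have hMleft : ∀ (a x y : G) (t : ℝ), 0 < t → M (op a x) (op a y) t = M x y t := by
    intro a x y t ht
    rw [hMdef, hMdef, GyroAux.key_left, hN.gyr_eq _ _ _ t ht]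
  have hMtri : ∀ (x y z : G) (t s : ℝ), 0 < t → 0 < s →
      star (M x y t) (M y z s) ≤ M x z (t + s) := by
    intro x y z t s ht hs
    rw [hMdef, hMdef, hMdef, GyroAux.tri_decomp x y z]
    calc star (N (op (neg x) y) t) (N (op (neg y) z) s)
        = star (N (op (neg x) y) t) (N (gyr (neg x) y (op (neg y) z)) s) := by
          rw [hN.gyr_eq _ _ _ s hs]
      _ ≤ _ := hN.subadd _ _ t s ht hs
  have hMneg : ∀ (x y : G) (s : ℝ), 0 < s → M x y s ≤ M (neg x) (neg y) s := by
    intro x y s hs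
    have h1 := hright x y (neg y) s hs
    rw [GyroAux.op_right_neg] at h1
    have h2 : M (op x (neg y)) e s = M (neg x) (neg y) s := by
      rw [hMdef, hMdef, GyroAux.op_e_right, hN.neg_eq _ s hs, GyroAux.neg_neg']
    rw [h2] at h1
    exact h1
  have hMcont : ∀ x y : G, ContinuousOn (M x y) (Set.Ioi 0) := by
    intro x y
    have he : M x y = fun t => N (op (neg x) y) t := funext fun t => hMdef x y t
    rw [he]
    exact hN.cont _
  have key_op : ∀ (x : G) (ε t : ℝ), 0 < ε → 0 < t → ∀ a b : G, 1 - ε < M x (op a b) t →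
      ∃ δ s : ℝ, 0 < δ ∧ δ < 1 ∧ 0 < s ∧
        ∀ a' b' : G, 1 - δ < M a a' s → 1 - δ < M b b' s → 1 - ε < M x (op a' b') t := by
    intro x ε t hε ht a b hab
    obtain ⟨t0, ht0, ht0t, hab0⟩ := FAux.exists_t0 (hMcont x (op a b)) ht hab
    obtain ⟨δ1, hδ1, hδ1', hstar1⟩ :=
      FAux.exists_lt_star hstar (hM01 x (op a b) t0 ht0) hab0
    obtain ⟨δ2, hδ2, hδ2', hstar2⟩ :=
      FAux.exists_star_self hstar (show 1 - δ1 < 1 by linarith)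
    have hs : 0 < (t - t0) / 2 := by linarith
    refine ⟨δ2, (t - t0) / 2, hδ2, hδ2', hs, ?_⟩
    intro a' b' ha' hb'
    have h1 : 1 - δ2 ≤ M (op a b) (op a b') ((t - t0) / 2) := by
      rw [hMleft a b b' _ hs]; linarith
    have h2 : 1 - δ2 ≤ M (op a b') (op a' b') ((t - t0) / 2) :=
      le_trans ha'.le (hright a a' b' _ hs)
    have h3 : 1 - δ1 < M (op a b) (op a' b') ((t - t0) / 2 + (t - t0) / 2) :=
      lt_of_lt_of_le hstar2 (le_trans (hstar.mono _ _ _ _ h1 h2)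
        (hMtri (op a b) (op a b') (op a' b') _ _ hs hs))
    have h4 : star (M x (op a b) t0) (1 - δ1) ≤
        M x (op a' b') (t0 + ((t - t0) / 2 + (t - t0) / 2)) :=
      le_trans (hstar.mono _ _ _ _ (le_refl _) h3.le)
        (hMtri x (op a b) (op a' b') t0 _ ht0 (by linarith))
    have ht' : t0 + ((t - t0) / 2 + (t - t0) / 2) = t := by ring
    rw [← ht']
    exact lt_of_lt_of_le hstar1 h4
  have key_neg : ∀ (x : G) (ε t : ℝ), 0 < ε → 0 < t → ∀ a : G, 1 - ε < M x (neg a) t →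
      ∃ δ s : ℝ, 0 < δ ∧ δ < 1 ∧ 0 < s ∧
        ∀ a' : G, 1 - δ < M a a' s → 1 - ε < M x (neg a') t := by
    intro x ε t hε ht a hab
    obtain ⟨t0, ht0, ht0t, hab0⟩ := FAux.exists_t0 (hMcont x (neg a)) ht hab
    obtain ⟨δ1, hδ1, hδ1', hstar1⟩ :=
      FAux.exists_lt_star hstar (hM01 x (neg a) t0 ht0) hab0
    refine ⟨δ1, t - t0, hδ1, hδ1', by linarith, ?_⟩
    intro a' ha'
    have h1 : 1 - δ1 ≤ M (neg a) (neg a') (t - t0) :=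
      le_trans ha'.le (hMneg a a' (t - t0) (by linarith))
    have h4 : star (M x (neg a) t0) (1 - δ1) ≤ M x (neg a') (t0 + (t - t0)) :=
      le_trans (hstar.mono _ _ _ _ (le_refl _) h1)
        (hMtri x (neg a) (neg a') t0 (t - t0) ht0 (by linarith))
    have ht' : t0 + (t - t0) = t := by ring
    rw [← ht']
    exact lt_of_lt_of_le hstar1 h4
  have hgen : fuzzyTopology M = TopologicalSpace.generateFrom
      {B | ∃ x ε t, 0 < ε ∧ ε < 1 ∧ 0 < t ∧ B = {y | 1 - ε < M x y t}} := rfl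
  letI : TopologicalSpace G := fuzzyTopology M
  rw [hgen]
  constructor
  · refine continuous_generateFrom_iff.mpr ?_
    rintro S ⟨x, ε, t, hε, hε1, ht, rfl⟩
    rw [isOpen_prod_iff]
    rintro a b hab
    have hab' : 1 - ε < M x (op a b) t := hab
    obtain ⟨δ, s, hδ, hδ1, hs, himp⟩ := key_op x ε t hε ht a b hab'
    refine ⟨{y | 1 - δ < M a y s}, {y | 1 - δ < M b y s}, ?_, ?_, ?_, ?_, ?_⟩
    · exact TopologicalSpace.GenerateOpen.basic _ ⟨a, δ, s, hδ, hδ1, hs, rfl⟩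
    · exact TopologicalSpace.GenerateOpen.basic _ ⟨b, δ, s, hδ, hδ1, hs, rfl⟩
    · show 1 - δ < M a a s
      rw [hMself a s hs]; linarith
    · show 1 - δ < M b b s
      rw [hMself b s hs]; linarith
    · rintro ⟨a', b'⟩ ⟨ha', hb'⟩
      exact himp a' b' ha' hb'
  · refine continuous_generateFrom_iff.mpr ?_
    rintro S ⟨x, ε, t, hε, hε1, ht, rfl⟩
    rw [isOpen_iff_forall_mem_open]
    intro a ha
    have ha' : 1 - ε < M x (neg a) t := ha
    obtain ⟨δ, s, hδ, hδ1, hs, himp⟩ := key_neg x ε t hε ht a ha'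
    refine ⟨{y | 1 - δ < M a y s}, ?_, ?_, ?_⟩
    · intro a' ha''
      exact himp a' ha''
    · exact TopologicalSpace.GenerateOpen.basic _ ⟨a, δ, s, hδ, hδ1, hs, rfl⟩
    · show 1 - δ < M a a s
      rw [hMself a s hs]; linarith
end

section
/- Let (X,d) be a metric space and * any continuous t-norm. Then the standard fuzzy metric space (X, M_d, *), where M_d(x,y,t) = t/(t+d(x,y)), admits a fuzzy metric completion, which is (up to isometry) uniquely given by the standard fuzzy metric space of the metric completion of (X,d). -/
open Filter Topology

universe u

open Gyrogroup

/-- Convergence of a sequence in a fuzzy metric space. -/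
def FuzzyConvergesTo {X : Type u} (M : X → X → ℝ → ℝ) (s : ℕ → X) (x : X) : Prop :=
  ∀ ε ∈ Set.Ioo (0:ℝ) 1, ∀ t > (0:ℝ), ∃ n0 : ℕ, ∀ n ≥ n0, 1 - ε < M x (s n) t

/-- Cauchy sequences in a fuzzy metric space. -/
def FuzzyCauchy {X : Type u} (M : X → X → ℝ → ℝ) (s : ℕ → X) : Prop :=
  ∀ ε ∈ Set.Ioo (0:ℝ) 1, ∀ t > (0:ℝ), ∃ n0 : ℕ, ∀ m ≥ n0, ∀ n ≥ n0, 1 - ε < M (s m) (s n) t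

/-- A fuzzy metric space is complete if every Cauchy sequence converges. -/
def FuzzyComplete {X : Type u} (M : X → X → ℝ → ℝ) : Prop :=
  ∀ s : ℕ → X, FuzzyCauchy M s → ∃ x, FuzzyConvergesTo M s x


section Aux

open Set

-- arithmetic lemmas about the standard fuzzy metric t/(t+d)
lemma std_mem {t d : ℝ} (ht : 0 < t) (hd : 0 ≤ d) : t / (t + d) ∈ Icc (0:ℝ) 1 := by
  constructor
  · positivity
  · rw [div_le_one (by linarith)]; linarith

lemma std_lt_iff {ε t d : ℝ} (hε1 : ε < 1) (ht : 0 < t) (hd : 0 ≤ d) :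
    1 - ε < t / (t + d) ↔ (1 - ε) * d < ε * t := by
  rw [lt_div_iff₀ (by linarith)]
  constructor <;> intro h <;> nlinarith

variable {star : ℝ → ℝ → ℝ} (hstar : ContinuousTNorm star)

lemma star_one_left (hstar : ContinuousTNorm star) {a : ℝ} (ha : a ∈ Icc (0:ℝ) 1) :
    star 1 a = a := by rw [hstar.comm, hstar.one_id a ha]

lemma star_le_left (hstar : ContinuousTNorm star) {a b : ℝ} (ha : a ∈ Icc (0:ℝ) 1)
    (hb : b ∈ Icc (0:ℝ) 1) : star a b ≤ a := by
  calc star a b ≤ star a 1 := hstar.mono _ _ _ _ le_rfl hb.2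
  _ = a := hstar.one_id a ha

lemma star_le_right (hstar : ContinuousTNorm star) {a b : ℝ} (ha : a ∈ Icc (0:ℝ) 1)
    (hb : b ∈ Icc (0:ℝ) 1) : star a b ≤ b := by
  rw [hstar.comm]; exact star_le_left hstar hb ha

lemma tnorm_tendsto (hstar : ContinuousTNorm star) {a b : ℝ} (ha : a ∈ Icc (0:ℝ) 1)
    (hb : b ∈ Icc (0:ℝ) 1) {u v : ℕ → ℝ} (hu : ∀ n, u n ∈ Icc (0:ℝ) 1)
    (hv : ∀ n, v n ∈ Icc (0:ℝ) 1) (hua : Filter.Tendsto u Filter.atTop (𝓝 a))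
    (hvb : Filter.Tendsto v Filter.atTop (𝓝 b)) :
    Filter.Tendsto (fun n => star (u n) (v n)) Filter.atTop (𝓝 (star a b)) := by
  have hmem : (a, b) ∈ Icc (0:ℝ) 1 ×ˢ Icc (0:ℝ) 1 := ⟨ha, hb⟩
  have hc := (hstar.cont (a, b) hmem).tendsto
  have h1 : Filter.Tendsto (fun n => (u n, v n)) Filter.atTop
      (𝓝[Icc (0:ℝ) 1 ×ˢ Icc (0:ℝ) 1] (a, b)) := by
    apply tendsto_nhdsWithin_of_tendsto_nhds_of_eventually_within
    · exact hua.prodMk_nhds hvb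
    · exact Filter.Eventually.of_forall fun n => ⟨hu n, hv n⟩
  exact hc.comp h1

/-- near-one behavior of a continuous t-norm -/
lemma star_near_one (hstar : ContinuousTNorm star) :
    ∀ η ∈ Ioo (0:ℝ) 1, ∃ ε ∈ Ioo (0:ℝ) 1, 1 - η < star (1 - ε) (1 - ε) := by
  intro η hη
  have hten : Filter.Tendsto (fun n : ℕ => star (1 - 1/(n+2)) (1 - 1/(n+2)))
      Filter.atTop (𝓝 (star 1 1)) := by
    have hmem : ∀ n : ℕ, (1 - 1/((n:ℝ)+2)) ∈ Icc (0:ℝ) 1 := by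
      intro n
      have h2 : (0:ℝ) < (n:ℝ) + 2 := by positivity
      constructor
      · have : 1/((n:ℝ)+2) ≤ 1 := by rw [div_le_one h2]; linarith [Nat.cast_nonneg (α := ℝ) n]
        linarith
      · have : 0 < 1/((n:ℝ)+2) := by positivity
        linarith
    have hlim : Filter.Tendsto (fun n : ℕ => 1 - 1/((n:ℝ)+2)) Filter.atTop (𝓝 1) := by
      have h0 : Filter.Tendsto (fun n : ℕ => ((n:ℝ)+2)⁻¹) Filter.atTop (𝓝 0) :=
        (Filter.tendsto_atTop_add_const_right Filter.atTop (2:ℝ)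
          tendsto_natCast_atTop_atTop).inv_tendsto_atTop
      have : Filter.Tendsto (fun n : ℕ => 1/((n:ℝ)+2)) Filter.atTop (𝓝 0) := by
        simpa [one_div] using h0
      simpa using (tendsto_const_nhds (x := (1:ℝ))).sub this
    exact tnorm_tendsto hstar ⟨zero_le_one, le_rfl⟩ ⟨zero_le_one, le_rfl⟩ hmem hmem hlim hlim
  rw [hstar.one_id 1 ⟨zero_le_one, le_rfl⟩] at hten
  have := (hten.eventually (eventually_gt_nhds (by linarith [hη.1] : 1 - η < 1))).exists
  obtain ⟨n, hn⟩ := this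
  refine ⟨1/((n:ℝ)+2), ⟨by positivity, ?_⟩, hn⟩
  rw [div_lt_one (by positivity)]
  linarith [Nat.cast_nonneg (α := ℝ) n]

end Aux

section FuzzyAux

open Set

variable {star : ℝ → ℝ → ℝ} {Y : Type u} {MY : Y → Y → ℝ → ℝ}

/-- If `MY y y' t` exceeds `1 - η` for all small `η` then it equals `1`. -/
lemma fuzzy_eq_one (hMY : IsFuzzyMetric MY star) {y y' : Y} {t : ℝ} (ht : 0 < t)
    (h : ∀ η ∈ Ioo (0:ℝ) 1, 1 - η < MY y y' t) : MY y y' t = 1 := by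
  have hle := (hMY.mem y y' t ht).2
  by_contra hne
  have hlt : MY y y' t < 1 := lt_of_le_of_ne hle hne
  have hpos := hMY.pos y y' t ht
  have := h (1 - MY y y' t) ⟨by linarith, by linarith⟩
  linarith

/-- fuzzy limits are unique -/
lemma fuzzy_limit_unique (hstar : ContinuousTNorm star) (hMY : IsFuzzyMetric MY star)
    {u : ℕ → Y} {y y' : Y} (hy : FuzzyConvergesTo MY u y) (hy' : FuzzyConvergesTo MY u y') :
    y = y' := by
  rw [← hMY.eq_one_iff]
  intro t ht
  apply fuzzy_eq_one hMY ht
  intro η hη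
  obtain ⟨ε, hε, hεη⟩ := star_near_one hstar η hη
  obtain ⟨n1, h1⟩ := hy ε hε (t/2) (by linarith)
  obtain ⟨n2, h2⟩ := hy' ε hε (t/2) (by linarith)
  set n := max n1 n2
  have a1 := h1 n (le_max_left _ _)
  have a2 := h2 n (le_max_right _ _)
  have tri := hMY.tri y (u n) y' (t/2) (t/2) (by linarith) (by linarith)
  rw [hMY.symm (u n) y' (t/2) (by linarith)] at tri
  calc 1 - η < star (1 - ε) (1 - ε) := hεη
  _ ≤ star (MY y (u n) (t/2)) (MY y' (u n) (t/2)) := hstar.mono _ _ _ _ a1.le a2.le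
  _ ≤ MY y y' (t/2 + t/2) := tri
  _ = MY y y' t := by norm_num

/-- if `v` is asymptotically close to `u` and `u → y` then `v → y` -/
lemma fuzzy_conv_of_close (hstar : ContinuousTNorm star) (hMY : IsFuzzyMetric MY star)
    {u v : ℕ → Y} {y : Y} (hy : FuzzyConvergesTo MY u y)
    (hclose : ∀ ε ∈ Ioo (0:ℝ) 1, ∀ t > (0:ℝ), ∃ n0, ∀ n ≥ n0, 1 - ε < MY (u n) (v n) t) :
    FuzzyConvergesTo MY v y := by
  intro η hη t ht
  obtain ⟨ε, hε, hεη⟩ := star_near_one hstar η hη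
  obtain ⟨n1, h1⟩ := hy ε hε (t/2) (by linarith)
  obtain ⟨n2, h2⟩ := hclose ε hε (t/2) (by linarith)
  refine ⟨max n1 n2, fun n hn => ?_⟩
  have a1 := h1 n (le_trans (le_max_left _ _) hn)
  have a2 := h2 n (le_trans (le_max_right _ _) hn)
  have tri := hMY.tri y (u n) (v n) (t/2) (t/2) (by linarith) (by linarith)
  calc 1 - η < star (1 - ε) (1 - ε) := hεη
  _ ≤ star (MY y (u n) (t/2)) (MY (u n) (v n) (t/2)) := hstar.mono _ _ _ _ a1.le a2.le
  _ ≤ MY y (v n) (t/2 + t/2) := tri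
  _ = MY y (v n) t := by norm_num

end FuzzyAux

section StdAux

open Set Filter

lemma key_min {t s d1 d2 D : ℝ} (ht : 0 < t) (hs : 0 < s) (hd1 : 0 ≤ d1) (hd2 : 0 ≤ d2)
    (hD : 0 ≤ D) (hle : D ≤ d1 + d2) :
    min (t/(t+d1)) (s/(s+d2)) ≤ (t+s)/(t+s+D) := by
  rcases le_total (t*d2) (s*d1) with h | h
  · refine le_trans (min_le_left _ _) ?_
    rw [div_le_div_iff₀ (by linarith) (by linarith)]
    nlinarith
  · refine le_trans (min_le_right _ _) ?_
    rw [div_le_div_iff₀ (by linarith) (by linarith)]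
    nlinarith

lemma std_isFuzzyMetric {Z : Type*} [MetricSpace Z] {star : ℝ → ℝ → ℝ}
    (hstar : ContinuousTNorm star) :
    IsFuzzyMetric (fun (x y : Z) t => t / (t + dist x y)) star := by
  constructor
  · intro x y t ht; exact std_mem ht dist_nonneg
  · intro x y t ht; exact div_pos ht (by linarith [dist_nonneg (x := x) (y := y)])
  · intro x y
    constructor
    · intro h
      have h1 := h 1 one_pos
      have hd : (0:ℝ) ≤ dist x y := dist_nonneg
      rw [div_eq_one_iff_eq (by linarith)] at h1
      rw [← dist_eq_zero]; linarith
    · intro h t ht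
      subst h
      simp [dist_self, div_self (ne_of_gt ht)]
  · intro x y t _; rw [dist_comm]
  · intro x y z t s ht hs
    have h1 := std_mem ht (dist_nonneg (x := x) (y := y))
    have h2 := std_mem hs (dist_nonneg (x := y) (y := z))
    refine le_trans (le_min (star_le_left hstar h1 h2) (star_le_right hstar h1 h2)) ?_
    exact key_min ht hs dist_nonneg dist_nonneg dist_nonneg (dist_triangle x y z)
  · intro x y
    apply ContinuousOn.div continuous_id.continuousOn
      ((continuous_id.add continuous_const).continuousOn)
    intro r hr
    have h0 : (0:ℝ) < r := hr
    have h1 := dist_nonneg (x := x) (y := y)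
    show r + dist x y ≠ 0
    intro hc
    linarith

lemma std_conv {Z : Type*} [MetricSpace Z] {s : ℕ → Z} {x : Z}
    (h : Tendsto s atTop (𝓝 x)) :
    FuzzyConvergesTo (fun (x y : Z) t => t / (t + dist x y)) s x := by
  intro ε hε t ht
  have hδ : (0:ℝ) < ε * t / (1 - ε) := by
    exact div_pos (mul_pos hε.1 ht) (by linarith [hε.2])
  obtain ⟨n0, hn0⟩ := (Metric.tendsto_atTop.mp h) _ hδ
  refine ⟨n0, fun n hn => ?_⟩
  have := hn0 n hn
  rw [dist_comm] at this
  rw [std_lt_iff hε.2 ht dist_nonneg]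
  have h1ε : (0:ℝ) < 1 - ε := by linarith [hε.2]
  calc (1 - ε) * dist x (s n) < (1 - ε) * (ε * t / (1 - ε)) := by
        exact mul_lt_mul_of_pos_left this h1ε
  _ = ε * t := by field_simp

lemma std_cauchySeq {Z : Type*} [MetricSpace Z] {s : ℕ → Z}
    (h : FuzzyCauchy (fun (x y : Z) t => t / (t + dist x y)) s) : CauchySeq s := by
  rw [Metric.cauchySeq_iff]
  intro δ hδ
  obtain ⟨n0, hn0⟩ := h (1/2) (by norm_num) δ hδ
  refine ⟨n0, fun m hm n hn => ?_⟩
  have := hn0 m hm n hn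
  rw [std_lt_iff (by norm_num) hδ dist_nonneg] at this
  norm_num at this
  linarith

end StdAux

section MoreAux

open Set Filter

variable {star : ℝ → ℝ → ℝ} {Y : Type u} {MY : Y → Y → ℝ → ℝ}

lemma tendsto_one_of_fuzzy {A : ℕ → ℝ} (hA : ∀ n, A n ≤ 1)
    (h : ∀ ε ∈ Ioo (0:ℝ) 1, ∃ n0, ∀ n ≥ n0, 1 - ε < A n) :
    Tendsto A atTop (𝓝 1) := by
  rw [Metric.tendsto_atTop]
  intro ε hε
  have hm : min ε (1/2) ∈ Ioo (0:ℝ) 1 := ⟨lt_min hε (by norm_num), by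
    exact lt_of_le_of_lt (min_le_right _ _) (by norm_num)⟩
  obtain ⟨n0, hn0⟩ := h _ hm
  refine ⟨n0, fun n hn => ?_⟩
  have h1 := hn0 n hn
  have h2 := hA n
  rw [Real.dist_eq, abs_lt]
  constructor
  · have := min_le_left ε (1/2); linarith
  · linarith

lemma fuzzy_cauchy_of_conv (hstar : ContinuousTNorm star) (hMY : IsFuzzyMetric MY star)
    {u : ℕ → Y} {y : Y} (hy : FuzzyConvergesTo MY u y) : FuzzyCauchy MY u := by
  intro η hη t ht
  obtain ⟨ε, hε, hεη⟩ := star_near_one hstar η hη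
  obtain ⟨n0, h0⟩ := hy ε hε (t/2) (by linarith)
  refine ⟨n0, fun m hm n hn => ?_⟩
  have a1 := h0 m hm
  have a2 := h0 n hn
  rw [hMY.symm y (u m) (t/2) (by linarith)] at a1
  have tri := hMY.tri (u m) y (u n) (t/2) (t/2) (by linarith) (by linarith)
  calc 1 - η < star (1 - ε) (1 - ε) := hεη
  _ ≤ star (MY (u m) y (t/2)) (MY y (u n) (t/2)) := hstar.mono _ _ _ _ a1.le a2.le
  _ ≤ MY (u m) (u n) (t/2 + t/2) := tri
  _ = MY (u m) (u n) t := by norm_num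

lemma std_close_of_dist {dn : ℕ → ℝ} (hd : ∀ n, 0 ≤ dn n)
    (h : Tendsto dn atTop (𝓝 0)) :
    ∀ ε ∈ Ioo (0:ℝ) 1, ∀ t > (0:ℝ), ∃ n0, ∀ n ≥ n0, 1 - ε < t / (t + dn n) := by
  intro ε hε t ht
  have hδ : (0:ℝ) < ε * t / (1 - ε) := div_pos (mul_pos hε.1 ht) (by linarith [hε.2])
  obtain ⟨n0, hn0⟩ := (Metric.tendsto_atTop.mp h) _ hδ
  refine ⟨n0, fun n hn => ?_⟩
  have h1 := hn0 n hn
  rw [Real.dist_eq, abs_lt] at h1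
  rw [std_lt_iff hε.2 ht (hd n)]
  have h1ε : (0:ℝ) < 1 - ε := by linarith [hε.2]
  have : dn n < ε * t / (1 - ε) := by linarith [h1.2]
  calc (1 - ε) * dn n < (1 - ε) * (ε * t / (1 - ε)) := mul_lt_mul_of_pos_left this h1ε
  _ = ε * t := by field_simp

end MoreAux

section Unique

open Set Filter

lemma fuzzy_completion_unique {X : Type u} [MetricSpace X] {star : ℝ → ℝ → ℝ}
    (hstar : ContinuousTNorm star) {Y : Type u} {MY : Y → Y → ℝ → ℝ}
    (hMY : IsFuzzyMetric MY star) (hcomp : FuzzyComplete MY)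
    (f : X → Y) (hf : ∀ x y : X, ∀ t : ℝ, 0 < t → MY (f x) (f y) t = t / (t + dist x y))
    (hdense : ∀ y : Y, ∃ s : ℕ → X, FuzzyConvergesTo MY (fun n => f (s n)) y) :
    ∃ g : UniformSpace.Completion X → Y, Function.Bijective g ∧
      ∀ a b : UniformSpace.Completion X, ∀ t : ℝ, 0 < t →
        MY (g a) (g b) t = t / (t + dist a b) := by
  classical
  -- Step A : Cauchy sequences map to fuzzy Cauchy sequences
  have hFC : ∀ s : ℕ → X, CauchySeq (fun n => ((s n : UniformSpace.Completion X))) →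
      FuzzyCauchy MY (fun n => f (s n)) := by
    intro s hs ε hε t ht
    have hδ : (0:ℝ) < ε * t / (1 - ε) := div_pos (mul_pos hε.1 ht) (by linarith [hε.2])
    obtain ⟨n0, hn0⟩ := Metric.cauchySeq_iff.mp hs _ hδ
    refine ⟨n0, fun m hm n hn => ?_⟩
    have h1 := hn0 m hm n hn
    rw [UniformSpace.Completion.dist_eq] at h1
    rw [hf _ _ t ht, std_lt_iff hε.2 ht dist_nonneg]
    have h1ε : (0:ℝ) < 1 - ε := by linarith [hε.2]
    calc (1 - ε) * dist (s m) (s n) < (1 - ε) * (ε * t / (1 - ε)) :=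
          mul_lt_mul_of_pos_left h1 h1ε
    _ = ε * t := by field_simp
  -- Step B : choose, for each point of the completion, an approximating sequence and a limit
  have hex : ∀ a : UniformSpace.Completion X, ∃ (y : Y) (s : ℕ → X),
      Tendsto (fun n => ((s n : UniformSpace.Completion X))) atTop (𝓝 a) ∧
      FuzzyConvergesTo MY (fun n => f (s n)) y := by
    intro a
    have ha : a ∈ closure (Set.range ((↑) : X → UniformSpace.Completion X)) :=
      UniformSpace.Completion.denseRange_coe a
    obtain ⟨u, hu_mem, hu_lim⟩ := mem_closure_iff_seq_limit.mp ha
    choose s hs using hu_mem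
    have hlim : Tendsto (fun n => ((s n : UniformSpace.Completion X))) atTop (𝓝 a) := by
      have : (fun n => ((s n : UniformSpace.Completion X))) = u := funext hs
      rw [this]; exact hu_lim
    obtain ⟨y, hy⟩ := hcomp _ (hFC s hlim.cauchySeq)
    exact ⟨y, s, hlim, hy⟩
  choose g S hS hgS using hex
  have hone : (1:ℝ) ∈ Icc (0:ℝ) 1 := ⟨zero_le_one, le_rfl⟩
  -- tendsto-one lemmas for the approximating sequences
  have hA : ∀ a : UniformSpace.Completion X, ∀ δ > (0:ℝ),
      Tendsto (fun n => MY (g a) (f (S a n)) δ) atTop (𝓝 1) := by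
    intro a δ hδ
    exact tendsto_one_of_fuzzy (fun n => (hMY.mem _ _ δ hδ).2)
      (fun ε hε => hgS a ε hε δ hδ)
  -- Step C : the isometry identity
  have hkey : ∀ a b : UniformSpace.Completion X, ∀ t : ℝ, 0 < t →
      MY (g a) (g b) t = t / (t + dist a b) := by
    intro a b t ht
    have hd0 : (0:ℝ) ≤ dist a b := dist_nonneg
    have hdn : Tendsto (fun n => dist (S a n) (S b n)) atTop (𝓝 (dist a b)) := by
      have := (hS a).dist (hS b)
      simpa [UniformSpace.Completion.dist_eq] using this
    have hMt : MY (g a) (g b) t ∈ Icc (0:ℝ) 1 := hMY.mem _ _ t ht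
    -- lower bound
    have hlow : ∀ δ ∈ Ioo (0:ℝ) (t/2),
        (t - 2*δ) / ((t - 2*δ) + dist a b) ≤ MY (g a) (g b) t := by
      intro δ hδ
      obtain ⟨hδ0, hδt⟩ := hδ
      have ht2 : (0:ℝ) < t - 2*δ := by linarith
      have hBeq : ∀ n, MY (f (S a n)) (f (S b n)) (t - 2*δ)
          = (t - 2*δ) / ((t - 2*δ) + dist (S a n) (S b n)) := fun n => hf _ _ _ ht2
      have hBlim : Tendsto (fun n => MY (f (S a n)) (f (S b n)) (t - 2*δ)) atTop
          (𝓝 ((t - 2*δ) / ((t - 2*δ) + dist a b))) := by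
        have h2 : Tendsto (fun n => (t - 2*δ) / ((t - 2*δ) + dist (S a n) (S b n))) atTop
            (𝓝 ((t - 2*δ) / ((t - 2*δ) + dist a b))) :=
          tendsto_const_nhds.div (tendsto_const_nhds.add hdn) (by positivity)
        exact h2.congr (fun n => (hBeq n).symm)
      have hClim : Tendsto (fun n => MY (f (S b n)) (g b) δ) atTop (𝓝 1) := by
        have := hA b δ hδ0
        exact this.congr (fun n => hMY.symm _ _ δ hδ0)
      have hmemBinf : (t - 2*δ) / ((t - 2*δ) + dist a b) ∈ Icc (0:ℝ) 1 := std_mem ht2 hd0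
      have hmemA : ∀ n, MY (g a) (f (S a n)) δ ∈ Icc (0:ℝ) 1 := fun n => hMY.mem _ _ δ hδ0
      have hmemB : ∀ n, MY (f (S a n)) (f (S b n)) (t - 2*δ) ∈ Icc (0:ℝ) 1 :=
        fun n => hMY.mem _ _ _ ht2
      have hmemC : ∀ n, MY (f (S b n)) (g b) δ ∈ Icc (0:ℝ) 1 := fun n => hMY.mem _ _ δ hδ0
      have hBC : Tendsto (fun n => star (MY (f (S a n)) (f (S b n)) (t - 2*δ))
          (MY (f (S b n)) (g b) δ)) atTop
          (𝓝 ((t - 2*δ) / ((t - 2*δ) + dist a b))) := by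
        have := tnorm_tendsto hstar hmemBinf hone hmemB hmemC hBlim hClim
        rwa [hstar.one_id _ hmemBinf] at this
      have hfin : Tendsto (fun n => star (MY (g a) (f (S a n)) δ)
          (star (MY (f (S a n)) (f (S b n)) (t - 2*δ)) (MY (f (S b n)) (g b) δ)))
          atTop (𝓝 ((t - 2*δ) / ((t - 2*δ) + dist a b))) := by
        have := tnorm_tendsto hstar hone hmemBinf hmemA
          (fun n => hstar.mem _ _ (hmemB n) (hmemC n)) (hA a δ hδ0) hBC
        rwa [star_one_left hstar hmemBinf] at this
      apply le_of_tendsto' hfin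
      intro n
      have t1 := hMY.tri (f (S a n)) (f (S b n)) (g b) (t - 2*δ) δ ht2 hδ0
      have t2 := hMY.tri (g a) (f (S a n)) (g b) δ ((t - 2*δ) + δ) hδ0 (by linarith)
      have heq : δ + ((t - 2*δ) + δ) = t := by ring
      rw [heq] at t2
      exact le_trans (hstar.mono _ _ _ _ le_rfl t1) t2
    -- upper bound
    have hupp : ∀ δ > (0:ℝ), MY (g a) (g b) t ≤ (t + 2*δ) / ((t + 2*δ) + dist a b) := by
      intro δ hδ0
      have ht2 : (0:ℝ) < t + 2*δ := by linarith
      have hLeq : ∀ n, MY (f (S a n)) (f (S b n)) (t + 2*δ)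
          = (t + 2*δ) / ((t + 2*δ) + dist (S a n) (S b n)) := fun n => hf _ _ _ ht2
      have hLlim : Tendsto (fun n => MY (f (S a n)) (f (S b n)) (t + 2*δ)) atTop
          (𝓝 ((t + 2*δ) / ((t + 2*δ) + dist a b))) := by
        have h2 : Tendsto (fun n => (t + 2*δ) / ((t + 2*δ) + dist (S a n) (S b n))) atTop
            (𝓝 ((t + 2*δ) / ((t + 2*δ) + dist a b))) :=
          tendsto_const_nhds.div (tendsto_const_nhds.add hdn) (by positivity)
        exact h2.congr (fun n => (hLeq n).symm)
      have hA'lim : Tendsto (fun n => MY (f (S a n)) (g a) δ) atTop (𝓝 1) :=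
        (hA a δ hδ0).congr (fun n => hMY.symm _ _ δ hδ0)
      have hC'lim : Tendsto (fun n => MY (g b) (f (S b n)) δ) atTop (𝓝 1) := hA b δ hδ0
      have hmemA' : ∀ n, MY (f (S a n)) (g a) δ ∈ Icc (0:ℝ) 1 := fun n => hMY.mem _ _ δ hδ0
      have hmemC' : ∀ n, MY (g b) (f (S b n)) δ ∈ Icc (0:ℝ) 1 := fun n => hMY.mem _ _ δ hδ0
      have hinner : Tendsto (fun n => star (MY (f (S a n)) (g a) δ) (MY (g a) (g b) t))
          atTop (𝓝 (MY (g a) (g b) t)) := by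
        have := tnorm_tendsto hstar hone hMt hmemA' (fun _ => hMt) hA'lim tendsto_const_nhds
        rwa [star_one_left hstar hMt] at this
      have houter : Tendsto (fun n => star (star (MY (f (S a n)) (g a) δ) (MY (g a) (g b) t))
          (MY (g b) (f (S b n)) δ)) atTop (𝓝 (MY (g a) (g b) t)) := by
        have := tnorm_tendsto hstar hMt hone
          (fun n => hstar.mem _ _ (hmemA' n) hMt) hmemC' hinner hC'lim
        rwa [hstar.one_id _ hMt] at this
      apply le_of_tendsto_of_tendsto' houter hLlim
      intro n
      have t1 := hMY.tri (f (S a n)) (g a) (g b) δ t hδ0 ht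
      have t2 := hMY.tri (f (S a n)) (g b) (f (S b n)) (δ + t) δ (by linarith) hδ0
      have heq : (δ + t) + δ = t + 2*δ := by ring
      rw [heq] at t2
      exact le_trans (hstar.mono _ _ _ _ t1 le_rfl) t2
    -- pass to the limit δ → 0⁺
    have hlb : t / (t + dist a b) ≤ MY (g a) (g b) t := by
      have hφ : Tendsto (fun δ : ℝ => (t - 2*δ) / ((t - 2*δ) + dist a b)) (𝓝[>] (0:ℝ))
          (𝓝 (t / (t + dist a b))) := by
        have hc : ContinuousAt (fun δ : ℝ => (t - 2*δ) / ((t - 2*δ) + dist a b)) 0 := by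
          apply ContinuousAt.div (by fun_prop) (by fun_prop)
          simp only [mul_zero, sub_zero]
          positivity
        have := hc.tendsto.mono_left (nhdsWithin_le_nhds (s := Set.Ioi (0:ℝ)))
        simpa using this
      apply le_of_tendsto hφ
      filter_upwards [Ioo_mem_nhdsGT_of_mem (⟨le_rfl, by linarith⟩ : (0:ℝ) ∈ Ico 0 (t/2))]
        with δ hδ
      exact hlow δ hδ
    have hub : MY (g a) (g b) t ≤ t / (t + dist a b) := by
      have hφ : Tendsto (fun δ : ℝ => (t + 2*δ) / ((t + 2*δ) + dist a b)) (𝓝[>] (0:ℝ))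
          (𝓝 (t / (t + dist a b))) := by
        have hc : ContinuousAt (fun δ : ℝ => (t + 2*δ) / ((t + 2*δ) + dist a b)) 0 := by
          apply ContinuousAt.div (by fun_prop) (by fun_prop)
          simp only [mul_zero, add_zero]
          positivity
        have := hc.tendsto.mono_left (nhdsWithin_le_nhds (s := Set.Ioi (0:ℝ)))
        simpa using this
      apply ge_of_tendsto hφ
      filter_upwards [self_mem_nhdsWithin] with δ hδ
      exact hupp δ hδ
    exact le_antisymm hub hlb
  refine ⟨g, ⟨?_, ?_⟩, hkey⟩
  · -- injective
    intro a b hab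
    have h1 := (hMY.eq_one_iff (g a) (g b)).mpr hab 1 one_pos
    rw [hkey a b 1 one_pos] at h1
    have hd0 : (0:ℝ) ≤ dist a b := dist_nonneg
    rw [div_eq_one_iff_eq (by linarith)] at h1
    exact dist_eq_zero.mp (by linarith)
  · -- surjective
    intro y
    obtain ⟨s, hs⟩ := hdense y
    have hfc := fuzzy_cauchy_of_conv hstar hMY hs
    have hsC : CauchySeq (fun n => ((s n : UniformSpace.Completion X))) := by
      apply std_cauchySeq
      intro ε hε t ht
      obtain ⟨n0, hn0⟩ := hfc ε hε t ht
      refine ⟨n0, fun m hm n hn => ?_⟩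
      have := hn0 m hm n hn
      rw [hf _ _ t ht] at this
      simpa [UniformSpace.Completion.dist_eq] using this
    obtain ⟨a, ha⟩ := cauchySeq_tendsto_of_complete hsC
    refine ⟨a, ?_⟩
    have hdist : Tendsto (fun n => dist (S a n) (s n)) atTop (𝓝 0) := by
      have := (hS a).dist ha
      simpa [UniformSpace.Completion.dist_eq] using this
    have hclose : ∀ ε ∈ Ioo (0:ℝ) 1, ∀ t > (0:ℝ), ∃ n0, ∀ n ≥ n0,
        1 - ε < MY (f (S a n)) (f (s n)) t := by
      intro ε hε t ht
      obtain ⟨n0, hn0⟩ := std_close_of_dist (fun n => dist_nonneg) hdist ε hε t ht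
      exact ⟨n0, fun n hn => by rw [hf _ _ t ht]; exact hn0 n hn⟩
    have hconv2 : FuzzyConvergesTo MY (fun n => f (s n)) (g a) :=
      fuzzy_conv_of_close hstar hMY (hgS a) hclose
    exact fuzzy_limit_unique hstar hMY hconv2 hs

end Unique
theorem standard_fuzzy_metric_completion {X : Type u} [MetricSpace X]
    (star : ℝ → ℝ → ℝ) (hstar : ContinuousTNorm star) :
    -- the standard fuzzy metric of the metric completion is a complete fuzzy metric
    IsFuzzyMetric (fun (x y : UniformSpace.Completion X) t => t / (t + dist x y)) star ∧
    FuzzyComplete (fun (x y : UniformSpace.Completion X) t => t / (t + dist x y)) ∧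
    -- `X` embeds isometrically (for the standard fuzzy metrics) as a dense subspace
    (∀ x y : X, ∀ t : ℝ, 0 < t →
      t / (t + dist (x : UniformSpace.Completion X) (y : UniformSpace.Completion X))
        = t / (t + dist x y)) ∧
    DenseRange ((↑) : X → UniformSpace.Completion X) ∧
    -- uniqueness up to isometry of the fuzzy metric completion
    (∀ (Y : Type u) (MY : Y → Y → ℝ → ℝ), IsFuzzyMetric MY star → FuzzyComplete MY →
      ∀ f : X → Y, (∀ x y : X, ∀ t : ℝ, 0 < t → MY (f x) (f y) t = t / (t + dist x y)) →
      (∀ y : Y, ∃ s : ℕ → X, FuzzyConvergesTo MY (fun n => f (s n)) y) →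
      ∃ g : UniformSpace.Completion X → Y, Function.Bijective g ∧
        ∀ a b : UniformSpace.Completion X, ∀ t : ℝ, 0 < t →
          MY (g a) (g b) t = t / (t + dist a b)) := by
  refine ⟨std_isFuzzyMetric hstar, ?_, ?_, UniformSpace.Completion.denseRange_coe, ?_⟩
  · intro s hs
    obtain ⟨x, hx⟩ := cauchySeq_tendsto_of_complete (std_cauchySeq hs)
    exact ⟨x, std_conv hx⟩
  · intro x y t _
    rw [UniformSpace.Completion.dist_eq]
  · intro Y MY hMY hcomp f hf hdense
    exact fuzzy_completion_unique hstar hMY hcomp f hf hdense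
end

section
/- Let (G, M, *) be a fuzzy metric gyrogroup with (M,*) invariant under left gyrotranslations. If (G, M, *) is complete, then every fuzzy metric (N,*) on G that induces the same topology and is invariant under left gyrotranslations is also complete. -/
open Filter Topology

universe u

open Gyrogroup

section Aux

variable {X : Type u} {M : X → X → ℝ → ℝ} {star : ℝ → ℝ → ℝ}

lemma IsFuzzyMetric.self_one (hM : IsFuzzyMetric M star) (x : X) {t : ℝ} (ht : 0 < t) :
    M x x t = 1 :=
  ((hM.eq_one_iff x x).mpr rfl) t ht

lemma IsFuzzyMetric.mono_t (hstar : ContinuousTNorm star) (hM : IsFuzzyMetric M star)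
    (x y : X) {t t' : ℝ} (ht : 0 < t) (htt : t ≤ t') : M x y t ≤ M x y t' := by
  rcases eq_or_lt_of_le htt with rfl | h
  · exact le_refl _
  · have h1 := hM.tri x y y t (t' - t) ht (by linarith)
    rw [hM.self_one y (by linarith), hstar.one_id _ (hM.mem x y t ht)] at h1
    have : t + (t' - t) = t' := by ring
    rwa [this] at h1

lemma ball_subball (hstar : ContinuousTNorm star) (hM : IsFuzzyMetric M star)
    {x y : X} {ε t : ℝ} (hε0 : 0 < ε) (hε1 : ε < 1) (ht : 0 < t)
    (hxy : 1 - ε < M x y t) :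
    ∃ δ s, 0 < δ ∧ δ < 1 ∧ 0 < s ∧ ∀ z, 1 - δ < M y z s → 1 - ε < M x z t := by
  -- find t0 ∈ Ioo 0 t with 1 - ε < M x y t0
  have hc : ContinuousWithinAt (M x y) (Set.Ioi 0) t := (hM.cont x y) t (Set.mem_Ioi.mpr ht)
  have hev : (M x y) ⁻¹' Set.Ioi (1 - ε) ∈ 𝓝[Set.Ioi 0] t := hc (Ioi_mem_nhds hxy)
  have hne : (𝓝[Set.Ioo 0 t] t).NeBot := by
    apply mem_closure_iff_nhdsWithin_neBot.mp
    rw [closure_Ioo ht.ne]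
    exact Set.right_mem_Icc.mpr ht.le
  have hev1 : ∀ᶠ u in 𝓝[Set.Ioo 0 t] t, u ∈ (M x y) ⁻¹' Set.Ioi (1 - ε) :=
    nhdsWithin_mono t Set.Ioo_subset_Ioi_self hev
  have hev2 : ∀ᶠ u in 𝓝[Set.Ioo 0 t] t, u ∈ (M x y) ⁻¹' Set.Ioi (1 - ε) ∧ u ∈ Set.Ioo 0 t :=
    hev1.and self_mem_nhdsWithin
  obtain ⟨t0, ht0lt, ht0m⟩ := hev2.exists
  set r := M x y t0 with hr
  have hrmem : r ∈ Set.Icc (0:ℝ) 1 := hM.mem x y t0 ht0m.1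
  have hr1 : 1 - ε < r := ht0lt
  -- continuity of b ↦ star r b within Icc 0 1 at 1
  have hg : ContinuousWithinAt (fun b => star r b) (Set.Icc 0 1) 1 := by
    have h1 : ContinuousWithinAt (fun p : ℝ × ℝ => star p.1 p.2)
        (Set.Icc 0 1 ×ˢ Set.Icc 0 1) (r, 1) :=
      hstar.cont (r, 1) ⟨hrmem, Set.mem_Icc.mpr ⟨zero_le_one, le_refl 1⟩⟩
    exact h1.comp (Continuous.continuousWithinAt (by continuity))
      (fun b hb => ⟨hrmem, hb⟩)
  have hsr1 : star r 1 = r := hstar.one_id r hrmem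
  have hevb : (fun b => star r b) ⁻¹' Set.Ioi (1 - ε) ∈ 𝓝[Set.Icc 0 1] 1 := by
    apply hg
    show Set.Ioi (1 - ε) ∈ 𝓝 (star r 1)
    rw [hsr1]
    exact Ioi_mem_nhds hr1
  have hneb : (𝓝[Set.Ioo (0:ℝ) 1] 1).NeBot := by
    apply mem_closure_iff_nhdsWithin_neBot.mp
    rw [closure_Ioo (zero_ne_one)]
    exact Set.right_mem_Icc.mpr zero_le_one
  have hevb1 : ∀ᶠ b in 𝓝[Set.Ioo (0:ℝ) 1] 1, b ∈ (fun b => star r b) ⁻¹' Set.Ioi (1 - ε) :=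
    nhdsWithin_mono 1 Set.Ioo_subset_Icc_self hevb
  have hevb2 : ∀ᶠ b in 𝓝[Set.Ioo (0:ℝ) 1] 1,
      b ∈ (fun b => star r b) ⁻¹' Set.Ioi (1 - ε) ∧ b ∈ Set.Ioo (0:ℝ) 1 :=
    hevb1.and self_mem_nhdsWithin
  obtain ⟨b, hb, hbm⟩ := hevb2.exists
  refine ⟨1 - b, t - t0, by linarith [hbm.2], by linarith [hbm.1], by linarith [ht0m.2], ?_⟩
  intro z hz
  have hz' : b < M y z (t - t0) := by linarith
  have h1 := hM.tri x y z t0 (t - t0) ht0m.1 (by linarith [ht0m.2])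
  have h2 : star r b ≤ star (M x y t0) (M y z (t - t0)) :=
    hstar.mono _ _ _ _ (le_refl r) hz'.le
  have h3 : t0 + (t - t0) = t := by ring
  rw [h3] at h1
  have hb' : 1 - ε < star r b := hb
  linarith

lemma exists_ball_subset (hstar : ContinuousTNorm star) (hM : IsFuzzyMetric M star)
    {U : Set X} (hU : TopologicalSpace.GenerateOpen
      {B | ∃ x ε t, 0 < ε ∧ ε < 1 ∧ 0 < t ∧ B = {y | 1 - ε < M x y t}} U) :
    ∀ x ∈ U, ∃ ε t, 0 < ε ∧ ε < 1 ∧ 0 < t ∧ {y | 1 - ε < M x y t} ⊆ U := by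
  induction hU with
  | basic V hV =>
    obtain ⟨c, ε, t, hε0, hε1, ht, rfl⟩ := hV
    intro x hx
    obtain ⟨δ, s, hδ0, hδ1, hs, hsub⟩ := ball_subball hstar hM hε0 hε1 ht hx
    exact ⟨δ, s, hδ0, hδ1, hs, fun z hz => hsub z hz⟩
  | univ =>
    intro x _
    exact ⟨1/2, 1, by norm_num, by norm_num, by norm_num, fun y _ => Set.mem_univ y⟩
  | inter U V _ _ ihU ihV =>
    intro x hx
    obtain ⟨ε1, t1, hε10, hε11, ht1, hsub1⟩ := ihU x hx.1
    obtain ⟨ε2, t2, hε20, hε21, ht2, hsub2⟩ := ihV x hx.2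
    refine ⟨min ε1 ε2, min t1 t2, lt_min hε10 hε20,
      lt_of_le_of_lt (min_le_left _ _) hε11, lt_min ht1 ht2, ?_⟩
    intro y hy
    have hy' : (1 : ℝ) - min ε1 ε2 < M x y (min t1 t2) := hy
    have hmt := lt_min ht1 ht2
    constructor
    · apply hsub1
      have : M x y (min t1 t2) ≤ M x y t1 := hM.mono_t hstar x y hmt (min_le_left _ _)
      have h1 : (1:ℝ) - ε1 ≤ 1 - min ε1 ε2 := by
        have := min_le_left ε1 ε2; linarith
      exact lt_of_le_of_lt h1 (lt_of_lt_of_le hy' this)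
    · apply hsub2
      have : M x y (min t1 t2) ≤ M x y t2 := hM.mono_t hstar x y hmt (min_le_right _ _)
      have h1 : (1:ℝ) - ε2 ≤ 1 - min ε1 ε2 := by
        have := min_le_right ε1 ε2; linarith
      exact lt_of_le_of_lt h1 (lt_of_lt_of_le hy' this)
  | sUnion S _ ih =>
    intro x hx
    obtain ⟨V, hVS, hxV⟩ := hx
    obtain ⟨ε, t, hε0, hε1, ht, hsub⟩ := ih V hVS x hxV
    exact ⟨ε, t, hε0, hε1, ht, hsub.trans (Set.subset_sUnion_of_mem hVS)⟩

end Aux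

theorem compatible_left_invariant_fuzzy_metric_complete {G : Type u} [Gyrogroup G]
    (M N : G → G → ℝ → ℝ) (star : ℝ → ℝ → ℝ)
    (hstar : ContinuousTNorm star) (hM : IsFuzzyMetric M star)
    (hMinv : ∀ a x y : G, ∀ t : ℝ, 0 < t → M (op a x) (op a y) t = M x y t)
    (htopgyr : @Continuous (G × G) G
        (@instTopologicalSpaceProd G G (fuzzyTopology M) (fuzzyTopology M)) (fuzzyTopology M)
        (fun p => op p.1 p.2) ∧
      @Continuous G G (fuzzyTopology M) (fuzzyTopology M) neg)
    (hMcomp : FuzzyComplete M)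
    (hN : IsFuzzyMetric N star)
    (hNtop : fuzzyTopology N = fuzzyTopology M)
    (hNinv : ∀ a x y : G, ∀ t : ℝ, 0 < t → N (op a x) (op a y) t = N x y t) :
    FuzzyComplete N := by
  intro s hs
  -- key identities via left invariance
  have keyN : ∀ m n : ℕ, ∀ u : ℝ, 0 < u →
      N (s m) (s n) u = N e (op (neg (s m)) (s n)) u := by
    intro m n u hu
    have h := hNinv (neg (s m)) (s m) (s n) u hu
    rw [op_left_neg] at h
    exact h.symm
  have keyM : ∀ m n : ℕ, ∀ u : ℝ, 0 < u →
      M (s m) (s n) u = M e (op (neg (s m)) (s n)) u := by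
    intro m n u hu
    have h := hMinv (neg (s m)) (s m) (s n) u hu
    rw [op_left_neg] at h
    exact h.symm
  -- s is M-Cauchy
  have hMcauchy : FuzzyCauchy M s := by
    intro ε hε t ht
    set B : Set G := {y | 1 - ε < M e y t} with hB
    have hBopen : (fuzzyTopology M).IsOpen B :=
      TopologicalSpace.GenerateOpen.basic _ ⟨e, ε, t, hε.1, hε.2, ht, rfl⟩
    have hBopenN : (fuzzyTopology N).IsOpen B := by rw [hNtop]; exact hBopen
    have heB : e ∈ B := by
      show 1 - ε < M e e t
      rw [hM.self_one e ht]
      linarith [hε.1]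
    obtain ⟨δ, u, hδ0, hδ1, hu, hsub⟩ := exists_ball_subset hstar hN hBopenN e heB
    obtain ⟨n0, hn0⟩ := hs δ ⟨hδ0, hδ1⟩ u hu
    refine ⟨n0, fun m hm n hn => ?_⟩
    have h1 : 1 - δ < N e (op (neg (s m)) (s n)) u := by
      rw [← keyN m n u hu]; exact hn0 m hm n hn
    have h2 : op (neg (s m)) (s n) ∈ B := hsub h1
    have h3 : 1 - ε < M e (op (neg (s m)) (s n)) t := h2
    rw [← keyM m n t ht] at h3
    exact h3
  obtain ⟨x, hx⟩ := hMcomp s hMcauchy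
  refine ⟨x, ?_⟩
  intro ε hε t ht
  set B : Set G := {y | 1 - ε < N x y t} with hB
  have hBopenN : (fuzzyTopology N).IsOpen B :=
    TopologicalSpace.GenerateOpen.basic _ ⟨x, ε, t, hε.1, hε.2, ht, rfl⟩
  have hBopen : (fuzzyTopology M).IsOpen B := by rw [← hNtop]; exact hBopenN
  have hxB : x ∈ B := by
    show 1 - ε < N x x t
    rw [hN.self_one x ht]
    linarith [hε.1]
  obtain ⟨δ, u, hδ0, hδ1, hu, hsub⟩ := exists_ball_subset hstar hM hBopen x hxB
  obtain ⟨n0, hn0⟩ := hx δ ⟨hδ0, hδ1⟩ u hu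
  exact ⟨n0, fun n hn => hsub (hn0 n hn)⟩
end
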